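/- Let n be a positive integer, let C[0,1] be the space of continuous real-valued functions on [0,1] with the maximum norm, let 𝒫_n ⊆ C[0,1] be the set of real polynomials of degree at most n, and let P_{𝒫_n} be the set-valued metric projection onto 𝒫_n (q ∈ P_{𝒫_n}(g) iff q ∈ 𝒫_n and ‖g − q‖ ≤ ‖g − w‖ for all w ∈ 𝒫_n). Let f ∈ C[0,1], let p ∈ P_{𝒫_n}(f), and let μ be a continuous linear functional on C[0,1] with μ(f) ≠ 0 and μ(q) = 0 for all q ∈ 𝒫_n. Then μ is not a fixed point of the Mordukhovich differential operator D̂*P_{𝒫_n}(f, p); that is, μ ∉ D̂*P_{𝒫_n}(f, p)(μ). -/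
import Mathlib


/-- The subset `𝒫ₙ` of `C[0,1]` consisting of (restrictions of) real polynomials of
degree at most `n`. -/
def polySet (n : ℕ) : Set C(Set.Icc (0 : ℝ) 1, ℝ) :=
  {f | ∃ p : Polynomial ℝ, p.natDegree ≤ n ∧ ∀ t : Set.Icc (0 : ℝ) 1, f t = p.eval ↑t}

/-- `q` is a best approximation of `g` from `𝒫ₙ` in the maximum norm, i.e.
`q ∈ P_{𝒫ₙ}(g)` for the set-valued metric projection `P_{𝒫ₙ}`. -/
def isBestApprox (n : ℕ) (g q : C(Set.Icc (0 : ℝ) 1, ℝ)) : Prop :=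
  q ∈ polySet n ∧ ∀ w ∈ polySet n, ‖g - q‖ ≤ ‖g - w‖

lemma polySet_smul {n : ℕ} (c : ℝ) {q : C(Set.Icc (0 : ℝ) 1, ℝ)} (hq : q ∈ polySet n) :
    c • q ∈ polySet n := by
  obtain ⟨P, hP, hPe⟩ := hq
  refine ⟨c • P, le_trans (Polynomial.natDegree_smul_le c P) hP, fun t => ?_⟩
  simp [hPe t, smul_eq_mul]

set_option maxHeartbeats 800000 in
/-- Let `f ∈ C[0,1]`, `p ∈ P_{𝒫ₙ}(f)`, and let `μ ∈ C*[0,1]` satisfy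
`μ(f) ≠ 0` and `μ(q) = 0` for all `q ∈ 𝒫ₙ`.  Then `μ` is not a fixed point of the
Mordukhovich differential operator `D̂*P_{𝒫ₙ}(f, p)`: `μ ∉ D̂*P_{𝒫ₙ}(f, p)(μ)`. -/
theorem mu_not_fixedPoint_coderivative_metric_projection_polySet
    (n : ℕ) (hn : 0 < n)
    (f : C(Set.Icc (0 : ℝ) 1, ℝ)) (p : C(Set.Icc (0 : ℝ) 1, ℝ))
    (hp : isBestApprox n f p)
    (μ : C(Set.Icc (0 : ℝ) 1, ℝ) →L[ℝ] ℝ) (hμf : μ f ≠ 0)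
    (hμ : ∀ q ∈ polySet n, μ q = 0) :
    ¬ (∀ ε > (0 : ℝ), ∃ δ > (0 : ℝ), ∀ g q : C(Set.Icc (0 : ℝ) 1, ℝ),
        isBestApprox n g q → ‖g - f‖ + ‖q - p‖ < δ →
          μ (g - f) - μ (q - p) ≤ ε * (‖g - f‖ + ‖q - p‖)) := by
  intro h
  have hfp : p ∈ polySet n := hp.1
  have hμp : μ p = 0 := hμ p hfp
  set M : ℝ := ‖f‖ + ‖p‖ + 1 with hM
  have hM0 : 0 < M := by positivity
  have habs : 0 < |μ f| := abs_pos.mpr hμf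
  obtain ⟨δ, hδ0, H⟩ := h (|μ f| / (2 * M)) (by positivity)
  set t : ℝ := min (δ / (2 * M)) (1/2) with ht
  have ht0 : 0 < t := lt_min (by positivity) (by norm_num)
  have ht1 : t ≤ 1/2 := min_le_right _ _
  have htδ : t ≤ δ / (2 * M) := min_le_left _ _
  set sgn : ℝ := if 0 < μ f then 1 else -1 with hsgn
  set s : ℝ := t * sgn with hsdef
  have hsgnμ : sgn * μ f = |μ f| := by
    rcases lt_trichotomy 0 (μ f) with h1 | h1 | h1
    · simp [hsgn, h1, abs_of_pos h1]
    · exact absurd h1.symm hμf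
    · simp [hsgn, not_lt.mpr h1.le, abs_of_neg h1]
  have hsabs : |s| = t := by
    rw [hsdef, abs_mul, abs_of_pos ht0, hsgn]
    split_ifs <;> norm_num
  have hs_le : |s| ≤ 1/2 := hsabs ▸ ht1
  obtain ⟨hsl, hsr⟩ := abs_le.mp hs_le
  have h1s : (0 : ℝ) < 1 + s := by linarith
  have h1s' : (1 + s) ≠ 0 := ne_of_gt h1s
  -- the perturbed pair
  set g : C(Set.Icc (0 : ℝ) 1, ℝ) := (1 + s) • f with hg
  set q : C(Set.Icc (0 : ℝ) 1, ℝ) := (1 + s) • p with hq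
  have hgf : g - f = s • f := by rw [hg]; module
  have hqp : q - p = s • p := by rw [hq]; module
  have hba : isBestApprox n g q := by
    constructor
    · exact polySet_smul _ hfp
    · intro w hw
      have hw' : (1 + s)⁻¹ • w ∈ polySet n := polySet_smul _ hw
      have key : ‖f - p‖ ≤ ‖f - (1 + s)⁻¹ • w‖ := hp.2 _ hw'
      have e1 : g - q = (1 + s) • (f - p) := by rw [hg, hq]; module
      have e2 : g - w = (1 + s) • (f - (1 + s)⁻¹ • w) := by
        rw [hg, smul_sub, smul_inv_smul₀ h1s']
      rw [e1, e2, norm_smul ((1:ℝ)+s) (f-p), norm_smul ((1:ℝ)+s) (f - (1+s)⁻¹ • w)]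
      exact mul_le_mul_of_nonneg_left key (norm_nonneg _)
  have hnf : ‖g - f‖ = t * ‖f‖ := by rw [hgf, norm_smul s f, Real.norm_eq_abs, hsabs]
  have hnp : ‖q - p‖ = t * ‖p‖ := by rw [hqp, norm_smul s p, Real.norm_eq_abs, hsabs]
  have hsmall : ‖g - f‖ + ‖q - p‖ < δ := by
    rw [hnf, hnp]
    have h1 : t * (‖f‖ + ‖p‖) ≤ t * M := by nlinarith [ht0.le]
    have h2 : t * M ≤ δ / 2 := by
      have := mul_le_mul_of_nonneg_right htδ hM0.le
      calc t * M ≤ δ / (2 * M) * M := this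
        _ = δ / 2 := by field_simp
    nlinarith
  have hineq := H g q hba hsmall
  have hμg : μ (g - f) = t * |μ f| := by
    rw [hgf, map_smul, smul_eq_mul, hsdef]
    rw [mul_assoc, hsgnμ]
  have hμq : μ (q - p) = 0 := by
    rw [hqp, map_smul, smul_eq_mul, hμp, mul_zero]
  rw [hμg, hμq, sub_zero, hnf, hnp] at hineq
  have hfpM : ‖f‖ + ‖p‖ ≤ M := by rw [hM]; linarith
  have key2 : |μ f| / (2 * M) * (t * ‖f‖ + t * ‖p‖) ≤ t * |μ f| / 2 := by
    have e : t * ‖f‖ + t * ‖p‖ = t * (‖f‖ + ‖p‖) := by ring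
    rw [e]
    calc |μ f| / (2 * M) * (t * (‖f‖ + ‖p‖)) ≤ |μ f| / (2 * M) * (t * M) := by
          apply mul_le_mul_of_nonneg_left _ (by positivity)
          exact mul_le_mul_of_nonneg_left hfpM ht0.le
      _ = t * |μ f| / 2 := by field_simp
  have hpos : 0 < t * |μ f| := mul_pos ht0 habs
  linarith
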